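/- With notation as above (λ a dominant SL_n-coweight with λ = Σ m_i α_{i*}, k = m_1, τ the standard embedding of coweight lattices of SL_n into SL_{kn}), one has τ(λ) ≤ kn·ϖ_1 in the coweight lattice of SL_{kn}, i.e. kn·ϖ_1 − τ(λ) is a nonnegative integer combination of simple coroots of SL_{kn}. -/

import Mathlib

/-!
A vector `v ∈ ℚ^N` with coordinate sum zero is `∑_{j=1}^{N-1} S_j(v) α_j`, where `S_j(v)` is the
sum of its first `j` coordinates. The partial sums of `ϖ_i` are `min i j - i j / N`. Reading the
hypothesis at the last coordinate gives `∑ λ_i i = n m_1 = N` for `N = kn`, so the partial sums of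
`N ϖ_1 - τ(λ)` are `N - ∑ λ_i min i j`: natural numbers, because `min i j ≤ i`.
-/

/-- The `i`-th fundamental coweight `ϖ_i` of `SL_N`, as a vector in `ℚ^N`. -/
def varpi (N i : ℕ) : Fin N → ℚ :=
  fun j => if (j : ℕ) < i then 1 - (i : ℚ) / N else -((i : ℚ) / N)

/-- The `j`-th simple coroot `α_j = e_j - e_{j+1}` of `SL_N` (1-based `j`). -/
def alphaC (N j : ℕ) : Fin N → ℚ :=
  fun x => (if (x : ℕ) = j - 1 then 1 else 0) - (if (x : ℕ) = j then 1 else 0)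

open Finset

theorem varpi_apply (N i : ℕ) (x : Fin N) :
    varpi N i x = (if (x : ℕ) < i then 1 else 0) - (i : ℚ) / N := by
  unfold varpi
  split_ifs <;> ring

theorem alphaC_apply (N j : ℕ) (x : Fin N) :
    alphaC N j x = (if (x : ℕ) = j - 1 then 1 else 0) - (if (x : ℕ) = j then 1 else 0) := rfl

def partialSum (N j : ℕ) : (Fin N → ℚ) →ₗ[ℚ] ℚ where
  toFun v := ∑ x : Fin N with x.val < j, v x
  map_add' _ _ := sum_add_distrib
  map_smul' _ _ := (mul_sum ..).symm

theorem partialSum_apply (N j : ℕ) (v : Fin N → ℚ) :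
    partialSum N j v = ∑ x : Fin N with x.val < j, v x := rfl

theorem partialSum_zero (N : ℕ) (v : Fin N → ℚ) : partialSum N 0 v = 0 := by
  simp [partialSum_apply]

theorem partialSum_of_le {N j : ℕ} (hj : N ≤ j) (v : Fin N → ℚ) :
    partialSum N j v = ∑ x, v x := by
  rw [partialSum_apply, filter_true_of_mem fun x _ => x.2.trans_le hj]

theorem partialSum_succ_sub {N : ℕ} (v : Fin N → ℚ) (y : Fin N) :
    partialSum N (y + 1) v - partialSum N y v = v y := by
  rw [partialSum_apply, partialSum_apply, sum_filter, sum_filter, ← sum_sub_distrib,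
    sum_eq_single y]
  · simp
  · intro x _ hxy
    have : (x : ℕ) ≠ y := Fin.val_ne_of_ne hxy
    split_ifs <;> first | omega | simp
  · simp

theorem eq_sum_partialSum_smul_alphaC {N : ℕ} (v : Fin N → ℚ) (hv : ∑ x, v x = 0) :
    v = ∑ j ∈ Icc 1 (N - 1), partialSum N j v • alphaC N j := by
  funext y
  have hy := y.2
  have hterm : ∀ j ∈ Icc 1 (N - 1), partialSum N j v * alphaC N j y =
      (if j = y + 1 then partialSum N j v else 0) - (if j = y then partialSum N j v else 0) := by
    intro j hj
    rw [mem_Icc] at hj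
    rw [alphaC_apply]
    split_ifs <;> first | omega | ring
  have hlast : partialSum N N v = 0 := (partialSum_of_le le_rfl v).trans hv
  simp only [Finset.sum_apply, Pi.smul_apply, smul_eq_mul]
  rw [sum_congr rfl hterm, sum_sub_distrib, sum_ite_eq', sum_ite_eq', ← partialSum_succ_sub v y]
  congr 1
  · split_ifs with h
    · rfl
    · rw [mem_Icc] at h
      rw [show (y : ℕ) + 1 = N by omega, hlast]
  · split_ifs with h
    · rfl
    · rw [mem_Icc] at h
      rw [show (y : ℕ) = 0 by omega, partialSum_zero]

theorem partialSum_varpi {N j : ℕ} (i : ℕ) (hj : j ≤ N) :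
    partialSum N j (varpi N i) = min i j - (i : ℚ) * j / N := by
  have hcard : ∀ m ≤ N, (#{x : Fin N | x.val < m} : ℚ) = m := fun m hm => by
    rw [Fin.card_filter_val_lt, min_eq_right hm]
  simp only [partialSum_apply, varpi_apply, sum_sub_distrib, sum_const, nsmul_eq_mul,
    sum_boole, filter_filter, hcard j hj]
  simp only [← lt_min_iff, min_comm j i, hcard _ ((min_le_right i j).trans hj)]
  push_cast
  ring

theorem partialSum_smul_varpi_one_sub_sum_smul_varpi {N j : ℕ} (s : Finset ℕ) (lam : ℕ → ℕ)
    (hs : ∑ i ∈ s, lam i * i = N) (hj : j ∈ Icc 1 N) :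
    partialSum N j ((N : ℚ) • varpi N 1 - ∑ i ∈ s, (lam i : ℚ) • varpi N i) =
      ((N - ∑ i ∈ s, lam i * min i j : ℕ) : ℚ) := by
  rw [mem_Icc] at hj
  have hle : ∑ i ∈ s, lam i * min i j ≤ N :=
    hs ▸ sum_le_sum fun i _ => Nat.mul_le_mul_left _ (min_le_left i j)
  have hsQ : ∑ i ∈ s, (lam i : ℚ) * i = N := by exact_mod_cast hs
  have hN : (N : ℚ) ≠ 0 := by exact_mod_cast (by omega : N ≠ 0)
  simp only [map_sub, map_smul, map_sum, partialSum_varpi _ hj.2, smul_eq_mul, mul_sub,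
    sum_sub_distrib, min_eq_left hj.1]
  rw [Nat.cast_sub hle]
  push_cast
  have : ∑ i ∈ s, (lam i : ℚ) * (i * j / N) = (∑ i ∈ s, (lam i : ℚ) * i) * j / N := by
    rw [sum_mul, sum_div]
    exact sum_congr rfl fun i _ => by ring
  rw [this, hsQ]
  field_simp
  ring

theorem sum_mul_eq_of_sum_smul_varpi_eq_sum_smul_alphaC {n : ℕ} (hn : 2 ≤ n) (lam m : ℕ → ℕ)
    (h : ∑ i ∈ Icc 1 (n - 1), (lam i : ℚ) • varpi n i =
      ∑ i ∈ Icc 1 (n - 1), (m i : ℚ) • alphaC n (n - i)) :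
    ∑ i ∈ Icc 1 (n - 1), lam i * i = n * m 1 := by
  let last : Fin n := ⟨n - 1, by omega⟩
  have hvarpi : ∀ i ∈ Icc 1 (n - 1), varpi n i last = -(i / n) := fun i hi => by
    rw [mem_Icc] at hi
    simp [varpi, last, show ¬ n - 1 < i by omega]
  have halpha : ∀ i ∈ Icc 1 (n - 1), alphaC n (n - i) last = if i = 1 then -1 else 0 :=
    fun i hi => by
      rw [mem_Icc] at hi
      simp only [alphaC_apply, last]
      split_ifs <;> first | omega | norm_num
  have hlast := congrFun h last
  simp only [Finset.sum_apply, Pi.smul_apply, smul_eq_mul] at hlast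
  rw [sum_congr rfl fun i hi => congrArg _ (hvarpi i hi),
    sum_congr rfl fun i hi => congrArg _ (halpha i hi)] at hlast
  simp only [mul_ite, mul_neg, mul_one, mul_zero, sum_ite_eq', mem_Icc] at hlast
  rw [if_pos ⟨le_rfl, by omega⟩, sum_neg_distrib, neg_inj] at hlast
  simp only [← mul_div_assoc, ← sum_div] at hlast
  rw [div_eq_iff (by positivity)] at hlast
  exact_mod_cast hlast.trans (mul_comm _ _)

/-- Let `λ = ∑_i λ_i ϖ_i = ∑_i m_i α_{i*}` be a dominant `SL_n`-coweight, `k = m_1`,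
and `τ` the standard embedding of the coweight lattice of `SL_n` into that of
`SL_{kn}` (sending `ϖ_i ↦ ϖ_i`).  Then `τ(λ) ≤ kn ϖ_1`, i.e. `kn ϖ_1 - τ(λ)` is a
nonnegative integer combination of simple coroots of `SL_{kn}`. -/
theorem tau_lambda_le_kn_varpi_one (n k : ℕ) (hn : 2 ≤ n) (hk : 1 ≤ k)
    (lam m : ℕ → ℕ) (hkm : k = m 1)
    (h : (∑ i ∈ Finset.Icc 1 (n - 1), (lam i : ℚ) • varpi n i) =
        ∑ i ∈ Finset.Icc 1 (n - 1), (m i : ℚ) • alphaC n (n - i)) :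
    ∃ c : ℕ → ℕ,
      ((k * n : ℕ) : ℚ) • varpi (k * n) 1 -
          ∑ i ∈ Finset.Icc 1 (n - 1), (lam i : ℚ) • varpi (k * n) i =
        ∑ j ∈ Finset.Icc 1 (k * n - 1), (c j : ℚ) • alphaC (k * n) j := by
  have hnN : n ≤ k * n := Nat.le_mul_of_pos_left n hk
  have hsum : ∑ i ∈ Icc 1 (n - 1), lam i * i = k * n := by
    rw [hkm, mul_comm]
    exact sum_mul_eq_of_sum_smul_varpi_eq_sum_smul_alphaC hn lam m h
  have hpartial {j : ℕ} (hj : j ∈ Icc 1 (k * n)) :=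
    partialSum_smul_varpi_one_sub_sum_smul_varpi _ lam hsum hj
  refine ⟨fun j => k * n - ∑ i ∈ Icc 1 (n - 1), lam i * min i j, ?_⟩
  refine (eq_sum_partialSum_smul_alphaC _ ?_).trans ?_
  · have hmin : ∀ i ∈ Icc 1 (n - 1), lam i * min i (k * n) = lam i * i := fun i hi => by
      rw [min_eq_left (by simp only [mem_Icc] at hi; omega)]
    rw [← partialSum_of_le le_rfl, hpartial (by simp only [mem_Icc]; omega), sum_congr rfl hmin,
      hsum, Nat.sub_self, Nat.cast_zero]
  · refine sum_congr rfl fun j hj => ?_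
    rw [hpartial (by simp only [mem_Icc] at hj ⊢; omega)]
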